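/- Let n ≥ 1 and let X be an n×n real symmetric positive definite matrix. Then: (i) if det X = 1, then −4·ln det X + exp(−2·tr X) − exp(−2n) ≤ 0 ≤ tr(X⁻¹) − n, and hence F(X) = tr(X⁻¹) − n ≥ 0; (ii) if det X > 1, then −4·ln det X + exp(−2·tr X) − exp(−2n) < 0 < ln det X, and F(X) = max{ ln det X, tr(X⁻¹) − n } > 0; (iii) if det X < 1, then ln det X < 0 < tr(X⁻¹) − n, and F(X) = max{ −4·ln det X + exp(−2·tr X) − exp(−2n), tr(X⁻¹) − n } > 0. -/

import Mathlib

/-!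
Since `log λ ≤ λ - 1` for every eigenvalue `λ > 0` of `X`, summing gives
`n + log det X ≤ tr X`, and applied to `X⁻¹` also `n - log det X ≤ tr X⁻¹`.
So `det X ≥ 1` forces `tr X ≥ n`, which makes `exp (-2 tr X) - exp (-2n) ≤ 0`
and hence the middle term of `F` at most `-4 log det X ≤ 0`; while `det X ≤ 1`
forces `tr X⁻¹ - n ≥ -log det X ≥ 0`.
-/

namespace Matrix.PosDef

variable {ι : Type*} [Fintype ι] [DecidableEq ι] {A : Matrix ι ι ℝ}

theorem card_add_log_det_le_trace (hA : A.PosDef) :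
    (Fintype.card ι : ℝ) + Real.log A.det ≤ A.trace := by
  have hpos := hA.eigenvalues_pos
  rw [hA.isHermitian.det_eq_prod_eigenvalues, hA.isHermitian.trace_eq_sum_eigenvalues]
  simp only [RCLike.ofReal_real_eq_id, id]
  rw [Real.log_prod fun i _ => (hpos i).ne', Fintype.card_eq_sum_ones, Nat.cast_sum,
    Nat.cast_one, ← Finset.sum_add_distrib]
  gcongr with i
  linarith [Real.log_le_sub_one_of_pos (hpos i)]

theorem card_sub_log_det_le_trace_inv (hA : A.PosDef) :
    (Fintype.card ι : ℝ) - Real.log A.det ≤ A⁻¹.trace := by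
  simpa [det_nonsing_inv, Real.log_inv, ← sub_eq_add_neg] using
    hA.inv.card_add_log_det_le_trace

theorem card_le_trace_of_one_le_det (hA : A.PosDef) (hdet : 1 ≤ A.det) :
    (Fintype.card ι : ℝ) ≤ A.trace := by
  linarith [hA.card_add_log_det_le_trace, Real.log_nonneg hdet]

end Matrix.PosDef

/-- The objective function of Example 6.2 of the paper:
`F(X) = max{ ln det X, −4 ln det X + e^(−2 tr X) − e^(−2n), tr X⁻¹ − n }`. -/
noncomputable def Fmat (n : ℕ) (X : Matrix (Fin n) (Fin n) ℝ) : ℝ :=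
  max (Real.log X.det)
    (max (-4 * Real.log X.det + Real.exp (-2 * X.trace) - Real.exp (-2 * n))
      (X⁻¹.trace - n))

theorem stmt_13_general {n : ℕ} (X : Matrix (Fin n) (Fin n) ℝ) (hX : X.PosDef) :
    (X.det = 1 →
      (-4 * Real.log X.det + Real.exp (-2 * X.trace) - Real.exp (-2 * n) ≤ 0 ∧
        0 ≤ X⁻¹.trace - n ∧ Fmat n X = X⁻¹.trace - n ∧ 0 ≤ Fmat n X)) ∧
    (1 < X.det →
      (-4 * Real.log X.det + Real.exp (-2 * X.trace) - Real.exp (-2 * n) < 0 ∧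
        0 < Real.log X.det ∧
        Fmat n X = max (Real.log X.det) (X⁻¹.trace - n) ∧ 0 < Fmat n X)) ∧
    (X.det < 1 →
      (Real.log X.det < 0 ∧ 0 < X⁻¹.trace - n ∧
        Fmat n X =
          max (-4 * Real.log X.det + Real.exp (-2 * X.trace) - Real.exp (-2 * n))
            (X⁻¹.trace - n) ∧
        0 < Fmat n X)) := by
  have hinv : (n : ℝ) - Real.log X.det ≤ X⁻¹.trace := by
    simpa using hX.card_sub_log_det_le_trace_inv
  have hexp (h : 1 ≤ X.det) : Real.exp (-2 * X.trace) ≤ Real.exp (-2 * n) := by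
    have : (n : ℝ) ≤ X.trace := by simpa using hX.card_le_trace_of_one_le_det h
    exact Real.exp_le_exp.mpr (by linarith)
  unfold Fmat
  refine ⟨fun h1 => ?_, fun h1 => ?_, fun h1 => ?_⟩
  · have := hexp h1.ge
    rw [h1, Real.log_one] at hinv ⊢
    refine ⟨by linarith, by linarith, ?_, ?_⟩ <;>
      simp only [max_def] <;> split_ifs <;> linarith
  · have := hexp h1.le
    have hlog := Real.log_pos h1
    refine ⟨by linarith, hlog, ?_, ?_⟩ <;>
      simp only [max_def] <;> split_ifs <;> linarith
  · have hlog := Real.log_neg hX.det_pos h1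
    refine ⟨hlog, by linarith, ?_, ?_⟩ <;>
      simp only [max_def] <;> split_ifs <;> linarith

/-- The piecewise description (eknp:1) of `F` according to the sign of `det X − 1`,
established in the proof of Claim 6.1 of the paper. -/
theorem stmt_13 {n : ℕ} (hn : 1 ≤ n) (X : Matrix (Fin n) (Fin n) ℝ) (hX : X.PosDef) :
    (X.det = 1 →
      (-4 * Real.log X.det + Real.exp (-2 * X.trace) - Real.exp (-2 * n) ≤ 0 ∧
        0 ≤ X⁻¹.trace - n ∧ Fmat n X = X⁻¹.trace - n ∧ 0 ≤ Fmat n X)) ∧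
    (1 < X.det →
      (-4 * Real.log X.det + Real.exp (-2 * X.trace) - Real.exp (-2 * n) < 0 ∧
        0 < Real.log X.det ∧
        Fmat n X = max (Real.log X.det) (X⁻¹.trace - n) ∧ 0 < Fmat n X)) ∧
    (X.det < 1 →
      (Real.log X.det < 0 ∧ 0 < X⁻¹.trace - n ∧
        Fmat n X =
          max (-4 * Real.log X.det + Real.exp (-2 * X.trace) - Real.exp (-2 * n))
            (X⁻¹.trace - n) ∧
        0 < Fmat n X)) :=
  stmt_13_general X hX
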